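/- arXiv:1111.5339 — 4 statements merged into one kernel-verified Lean document; each statement's English description precedes it below -/
import Mathlib

section
/- Let $K$ be a field, let $g \geq 2$ be an integer, and let $a_1, \dots, a_g \in K$ with $a_1 \neq 0$. Set $y = a_1 x + a_2 x^2 + \cdots + a_g x^g \in K[x]$. If $\kappa = 1 + k_1 x + \cdots + k_g x^g \in K[x]$ satisfies that the coefficient of $x^g$ in $\kappa \cdot y^n$ is zero for every $0 \leq n \leq g-1$, then $k_1 = -(g-1) a_2 / a_1$. -/
/-!
Only the case `n = g - 1` is needed. Writing `y = x · u` with `u(0) = a₁` and `u'(0) = a₂`, the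
coefficient of `x^g` in `κ · y^(g-1)` is the coefficient of `x` in `κ · u^(g-1)`, which is
`k₁ a₁^(g-1) + (g-1) a₁^(g-2) a₂`; its vanishing gives the formula since `a₁ ≠ 0`.
-/

open Polynomial

namespace Polynomial

variable {R : Type*} [CommSemiring R]

theorem coeff_one_mul (p q : R[X]) :
    (p * q).coeff 1 = p.coeff 1 * q.coeff 0 + q.coeff 1 * p.coeff 0 := by
  rw [← coeff_coe, coe_mul, PowerSeries.coeff_one_mul]
  simp [coeff_coe]

theorem coeff_one_pow (p : R[X]) (n : ℕ) :
    (p ^ n).coeff 1 = n * p.coeff 1 * p.coeff 0 ^ (n - 1) := by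
  rw [← coeff_coe, coe_pow, PowerSeries.coeff_one_pow]
  simp [coeff_coe]

theorem coeff_succ_mul_X_mul_pow (p u : R[X]) (n : ℕ) :
    (p * (X * u) ^ n).coeff (n + 1) =
      p.coeff 1 * u.coeff 0 ^ n + p.coeff 0 * (n * u.coeff 1 * u.coeff 0 ^ (n - 1)) := by
  rw [mul_pow, mul_left_comm, add_comm, coeff_X_pow_mul', if_pos (Nat.le_add_left n 1),
    Nat.add_sub_cancel, coeff_one_mul, coeff_one_pow, coeff_zero_eq_eval_zero,
    coeff_zero_eq_eval_zero, eval_pow]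
  ring

end Polynomial

/-- If `y = a₁x + ⋯ + a_g x^g` with `a₁ ≠ 0` and `κ = 1 + k₁x + ⋯ + k_g x^g`
satisfies that the coefficient of `x^g` in `κ · yⁿ` vanishes for `0 ≤ n ≤ g-1`,
then `k₁ = -(g-1)·a₂/a₁`. -/
theorem dualizing_gluing_datum_k1
    (K : Type*) [Field K] (g : ℕ) (hg : 2 ≤ g) (a : ℕ → K) (ha : a 1 ≠ 0)
    (k : ℕ → K)
    (hκ : ∀ n : ℕ, n ≤ g - 1 →
      (((1 : K[X]) + ∑ i ∈ Finset.Icc 1 g, C (k i) * X ^ i) *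
          (∑ i ∈ Finset.Icc 1 g, C (a i) * X ^ i) ^ n).coeff g = 0) :
    k 1 = -((g : K) - 1) * a 2 / a 1 := by
  obtain ⟨m, rfl⟩ : ∃ m, g = m + 1 + 1 := ⟨g - 2, by omega⟩
  set y : K[X] := ∑ i ∈ Finset.Icc 1 (m + 1 + 1), C (a i) * X ^ i
  have hy : y = X * y.divX := by simpa [y] using (X_mul_divX_add y).symm
  have key := hκ (m + 1) le_rfl
  rw [hy, coeff_succ_mul_X_mul_pow] at key
  simp [y, coeff_one, coeff_divX] at key
  have hscaled : a 1 ^ m * (k 1 * a 1) = a 1 ^ m * (-(m + 1) * a 2) := by linear_combination key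
  rw [eq_div_iff ha, mul_left_cancel₀ (pow_ne_zero m ha) hscaled]
  push_cast
  ring
end

section
/- Let $K$ be a field, let $k \geq 1$ be an integer, set $g = 2k+1$, and let $t \in K$. Set $y = x - t x^{k+2} \in K[x]$ and $\kappa = 1 + t k x^{k+1}$. Then for every integer $i$ with $0 \leq i \leq k$ one has $\kappa \cdot y^i \equiv x^i + t(k-i) x^{k+1+i} \pmod{x^{g+1}}$, and for every integer $i$ with $k \leq i \leq 2k$ one has $\kappa \cdot y^i \equiv x^i \pmod{x^{g+1}}$. In particular, the coefficient of $x^g$ in $\kappa \cdot y^i$ vanishes for all $0 \leq i \leq g-1$. -/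
/-!
Write `u = x^{k+1}`, so that `y = x (1 - t u)` and `κ = 1 + t k u`. Modulo `u²`, which is
`x^{2k+2} = x^{g+1}`, the binomial theorem gives `(1 - t u)^i ≡ 1 - i t u`, hence
`κ yⁱ ≡ xⁱ (1 + t (k - i) u)`. The correction term `t (k - i) x^{k+1+i}` vanishes for `i = k` and
lies in `(x^{g+1})` for `i > k`; and its `x^g`-coefficient is zero, as `k + 1 + i = g` forces `i = k`.
-/

open Polynomial

theorem sq_dvd_one_add_mul_mul_one_add_pow_sub {R : Type*} [CommRing R] (a b x : R) (i : ℕ) :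
    x ^ 2 ∣ (1 + a * x) * (1 + b * x) ^ i - (1 + (a + i * b) * x) := by
  obtain ⟨q, hq⟩ := sq_dvd_add_pow_sub_sub (b * x) 1 i
  refine ⟨(1 + a * x) * b ^ 2 * q + a * b * i, ?_⟩
  simp only [one_pow, one_mul, add_comm (1 : R)] at hq
  linear_combination (1 + a * x) * hq

theorem X_pow_dvd_kappa_mul_pow_sub {R : Type*} [CommRing R] (k i : ℕ) (t : R) :
    (X : R[X]) ^ (2 * k + 2) ∣
      ((1 : R[X]) + C (t * (k : R)) * X ^ (k + 1)) * ((X : R[X]) - C t * X ^ (k + 2)) ^ i -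
        (X ^ i + C (t * ((k : R) - (i : R))) * X ^ (k + 1 + i)) := by
  have key := sq_dvd_one_add_mul_mul_one_add_pow_sub (C (t * (k : R))) (-C t) (X ^ (k + 1)) i
  have hy : (X : R[X]) - C t * X ^ (k + 2) = X * (1 + -C t * X ^ (k + 1)) := by ring
  have hc : C (t * ((k : R) - (i : R))) = C (t * (k : R)) + (i : R[X]) * -C t := by
    simp only [map_mul, map_sub, map_natCast]
    ring
  rw [← pow_mul, show (k + 1) * 2 = 2 * k + 2 by ring] at key
  rw [hy, mul_pow, hc]
  convert key.mul_left (X ^ i) using 1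
  ring

theorem X_pow_dvd_C_mul_X_pow_of_le {R : Type*} [CommRing R] (k i : ℕ) (t : R) (hki : k ≤ i) :
    (X : R[X]) ^ (2 * k + 2) ∣ C (t * ((k : R) - (i : R))) * X ^ (k + 1 + i) := by
  obtain rfl | hlt := hki.eq_or_lt
  · simp
  · exact (pow_dvd_pow X (by omega)).mul_left _

theorem coeff_two_mul_add_one_X_pow_add_C_mul_X_pow {R : Type*} [CommRing R] (k i : ℕ) (t : R)
    (hi : i ≤ 2 * k) :
    (X ^ i + C (t * ((k : R) - (i : R))) * X ^ (k + 1 + i)).coeff (2 * k + 1) = 0 := by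
  rw [coeff_add, coeff_C_mul, coeff_X_pow, coeff_X_pow, if_neg (by omega)]
  split_ifs with h
  · obtain rfl : i = k := by omega
    simp
  · simp

theorem example_odd_genus_kappa_general
    (K : Type*) [Field K] (k : ℕ) (g : ℕ) (hg : g = 2 * k + 1) (t : K) :
    (∀ i : ℕ, i ≤ k →
      (X : K[X]) ^ (g + 1) ∣
        (((1 : K[X]) + C (t * (k : K)) * X ^ (k + 1)) *
            ((X : K[X]) - C t * X ^ (k + 2)) ^ i -
          (X ^ i + C (t * ((k - i : ℕ) : K)) * X ^ (k + 1 + i)))) ∧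
    (∀ i : ℕ, k ≤ i → i ≤ 2 * k →
      (X : K[X]) ^ (g + 1) ∣
        (((1 : K[X]) + C (t * (k : K)) * X ^ (k + 1)) *
            ((X : K[X]) - C t * X ^ (k + 2)) ^ i - X ^ i)) ∧
    (∀ i : ℕ, i ≤ g - 1 →
      (((1 : K[X]) + C (t * (k : K)) * X ^ (k + 1)) *
          ((X : K[X]) - C t * X ^ (k + 2)) ^ i).coeff g = 0) := by
  subst hg
  refine ⟨fun i hi => ?_, fun i hki _ => ?_, fun i hi => ?_⟩
  · rw [Nat.cast_sub hi]
    exact X_pow_dvd_kappa_mul_pow_sub k i t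
  · convert dvd_add (X_pow_dvd_kappa_mul_pow_sub k i t) (X_pow_dvd_C_mul_X_pow_of_le k i t hki)
      using 1
    ring
  · have hcoeff := X_pow_dvd_iff.mp (X_pow_dvd_kappa_mul_pow_sub k i t) (2 * k + 1) (by omega)
    rw [coeff_sub, sub_eq_zero] at hcoeff
    rw [hcoeff, coeff_two_mul_add_one_X_pow_add_C_mul_X_pow k i t (by omega)]

/-- For `g = 2k+1`, `y = x - t·x^{k+2}` and `κ = 1 + tk·x^{k+1}`, one has
`κ·yⁱ ≡ xⁱ + t(k-i)x^{k+1+i} (mod x^{g+1})` for `0 ≤ i ≤ k`, and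
`κ·yⁱ ≡ xⁱ (mod x^{g+1})` for `k ≤ i ≤ 2k`; in particular the coefficient of
`x^g` in `κ·yⁱ` vanishes for all `0 ≤ i ≤ g-1`. -/
theorem example_odd_genus_kappa
    (K : Type*) [Field K] (k : ℕ) (hk : 1 ≤ k) (g : ℕ) (hg : g = 2 * k + 1) (t : K) :
    (∀ i : ℕ, i ≤ k →
      (X : K[X]) ^ (g + 1) ∣
        (((1 : K[X]) + C (t * (k : K)) * X ^ (k + 1)) *
            ((X : K[X]) - C t * X ^ (k + 2)) ^ i -
          (X ^ i + C (t * ((k - i : ℕ) : K)) * X ^ (k + 1 + i)))) ∧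
    (∀ i : ℕ, k ≤ i → i ≤ 2 * k →
      (X : K[X]) ^ (g + 1) ∣
        (((1 : K[X]) + C (t * (k : K)) * X ^ (k + 1)) *
            ((X : K[X]) - C t * X ^ (k + 2)) ^ i - X ^ i)) ∧
    (∀ i : ℕ, i ≤ g - 1 →
      (((1 : K[X]) + C (t * (k : K)) * X ^ (k + 1)) *
          ((X : K[X]) - C t * X ^ (k + 2)) ^ i).coeff g = 0) :=
  example_odd_genus_kappa_general K k g hg t
end

section
/- Let $K$ be a field and $k \geq 1$ an integer. For $0 \leq i \leq 2k$ set $m_i = \max(i-k, 0)$, and define: (i) $z_i = u^i + m_i u^{i-k-1} \varepsilon$ in the ring of dual numbers over $K[u]$ (where $\varepsilon^2 = 0$), and (ii) $\varphi_i = w^i + m_i w^{i-k-1} t \in K[w,t]$. Suppose $c_{ij} \in K$ ($0 \leq i, j \leq 2k$) are such that $\sum_{i,j} c_{ij} z_i z_j = 0$. Then there exists a polynomial $f \in K[w]$ of degree at most $2k-2$ such that $\sum_{i,j} c_{ij} \varphi_i \varphi_j = f(w) \, t^2$; moreover $\sum_{i,j} c_{ij} z^{i+j} = 0$ in $K[z]$.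 -/
/-!
Write `zᵢ = aᵢ + bᵢ ε` and `φᵢ = aᵢ(w) + bᵢ(w) t` with `aᵢ = uⁱ` and `bᵢ = max(i-k,0) u^{i-k-1}`.
For the bilinear form `B(x, y) = ∑ cᵢⱼ xᵢ yⱼ`, the relation `∑ cᵢⱼ zᵢ zⱼ = 0` says exactly that
`B(a, a) = 0` and `B(a, b) + B(b, a) = 0`. Expanding `∑ cᵢⱼ φᵢ φⱼ` in powers of `t`, these are its
coefficients of `t⁰` and `t¹`, so only `B(b, b)(w) t²` survives, and `deg bᵢ ≤ k - 1` bounds its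
degree by `2k - 2`.
-/

/-- The canonical coordinates of the balanced ribbon of genus `2k+1`:
`zᵢ = uⁱ + max(i-k,0)·u^{i-k-1}·ε` in the dual numbers over `K[u]`. -/
noncomputable def ribbonCoord (K : Type*) [Field K] (k i : ℕ) :
    DualNumber (Polynomial K) :=
  TrivSqZeroExt.inl (Polynomial.X ^ i) +
    TrivSqZeroExt.inr (((i - k : ℕ) : Polynomial K) * Polynomial.X ^ (i - k - 1))

/-- The `K[w,t]`-components of the renormalized canonical sections of the
`A_{2g+1}`-rational curve: `φᵢ = wⁱ + max(i-k,0)·w^{i-k-1}·t`, with `w = X 0`,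
`t = X 1`. -/
noncomputable def phiSection (K : Type*) [Field K] (k i : ℕ) :
    MvPolynomial (Fin 2) K :=
  MvPolynomial.X 0 ^ i +
    MvPolynomial.C ((i - k : ℕ) : K) * MvPolynomial.X 0 ^ (i - k - 1) *
      MvPolynomial.X 1

open Polynomial TrivSqZeroExt

section BilinSum

variable {ι R : Type*} [CommRing R] (s : Finset ι) (c : ι → ι → R)

def bilinSum (x y : ι → R) : R :=
  ∑ i ∈ s, ∑ j ∈ s, c i j * (x i * y j)

theorem sum_sum_inl_mul_inl_add_inr (a b : ι → R) :
    ∑ i ∈ s, ∑ j ∈ s, (inl (c i j) * (inl (a i) + inr (b i)) * (inl (a j) + inr (b j)) :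
      DualNumber R) =
    inl (bilinSum s c a a) + inr (bilinSum s c a b + bilinSum s c b a) := by
  have hterm : ∀ i j, (inl (c i j) * (inl (a i) + inr (b i)) * (inl (a j) + inr (b j)) :
      DualNumber R) =
      inl (c i j * (a i * a j)) + inr (c i j * (a i * b j) + c i j * (b i * a j)) := by
    intro i j
    ext <;> simp [mul_add, add_mul] <;> ring
  simp only [hterm, bilinSum, Finset.sum_add_distrib, inl_sum, inr_sum, inr_add]

theorem bilinSum_eq_zero_of_sum_sum_inl_mul_inl_add_inr_eq_zero (a b : ι → R)
    (h : ∑ i ∈ s, ∑ j ∈ s, (inl (c i j) * (inl (a i) + inr (b i)) * (inl (a j) + inr (b j)) :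
      DualNumber R) = 0) :
    bilinSum s c a a = 0 ∧ bilinSum s c a b + bilinSum s c b a = 0 := by
  rw [sum_sum_inl_mul_inl_add_inr] at h
  exact ⟨by simpa using congrArg fst h, by simpa using congrArg snd h⟩

theorem sum_sum_map_mul_add_mul {S : Type*} [CommRing S] (f : R →+* S) (T : S)
    (a b : ι → R) :
    ∑ i ∈ s, ∑ j ∈ s, f (c i j) * (f (a i) + f (b i) * T) * (f (a j) + f (b j) * T) =
    f (bilinSum s c a a) + f (bilinSum s c a b + bilinSum s c b a) * T +
      f (bilinSum s c b b) * T ^ 2 := by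
  simp only [bilinSum, map_add, map_sum, map_mul, Finset.sum_mul,
    ← Finset.sum_add_distrib]
  refine Finset.sum_congr rfl fun i _ => Finset.sum_congr rfl fun j _ => ?_
  ring

end BilinSum

theorem natDegree_bilinSum_C_le {ι R : Type*} [CommRing R] (s : Finset ι) (c : ι → ι → R)
    (x y : ι → R[X]) {m n : ℕ} (hx : ∀ i ∈ s, (x i).natDegree ≤ m)
    (hy : ∀ j ∈ s, (y j).natDegree ≤ n) :
    (bilinSum s (fun i j => C (c i j)) x y).natDegree ≤ m + n :=
  natDegree_sum_le_of_forall_le _ _ fun i hi => natDegree_sum_le_of_forall_le _ _ fun j hj =>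
    (natDegree_C_mul_le _ _).trans <| natDegree_mul_le_of_le (hx i hi) (hy j hj)

noncomputable def ribbonCorrection (K : Type*) [Field K] (k i : ℕ) : K[X] :=
  ((i - k : ℕ) : K[X]) * X ^ (i - k - 1)

theorem ribbonCoord_eq (K : Type*) [Field K] (k i : ℕ) :
    ribbonCoord K k i = inl (X ^ i) + inr (ribbonCorrection K k i) :=
  rfl

theorem phiSection_eq (K : Type*) [Field K] (k i : ℕ) :
    phiSection K k i = aeval (MvPolynomial.X 0) (X ^ i : K[X]) +
      aeval (MvPolynomial.X 0) (ribbonCorrection K k i) * MvPolynomial.X 1 := by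
  simp [phiSection, ribbonCorrection]

theorem natDegree_ribbonCorrection_le (K : Type*) [Field K] {k i : ℕ} (hi : i ≤ 2 * k) :
    (ribbonCorrection K k i).natDegree ≤ k - 1 := by
  refine (natDegree_mul_le_of_le (natDegree_natCast _).le (natDegree_X_pow_le _)).trans ?_
  omega

theorem ribbon_relation_deforms_general (K : Type*) [Field K] (k : ℕ)
    (c : ℕ → ℕ → K)
    (hrel : ∑ i ∈ Finset.range (2 * k + 1), ∑ j ∈ Finset.range (2 * k + 1),
      TrivSqZeroExt.inl (Polynomial.C (c i j)) * ribbonCoord K k i * ribbonCoord K k j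
        = 0) :
    (∃ f : Polynomial K, f.natDegree ≤ 2 * k - 2 ∧
      ∑ i ∈ Finset.range (2 * k + 1), ∑ j ∈ Finset.range (2 * k + 1),
        MvPolynomial.C (c i j) * phiSection K k i * phiSection K k j =
      Polynomial.aeval (MvPolynomial.X 0 : MvPolynomial (Fin 2) K) f *
        MvPolynomial.X 1 ^ 2) ∧
    ∑ i ∈ Finset.range (2 * k + 1), ∑ j ∈ Finset.range (2 * k + 1),
      Polynomial.C (c i j) * (Polynomial.X : Polynomial K) ^ (i + j) = 0 := by
  set s := Finset.range (2 * k + 1)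
  set C' : ℕ → ℕ → K[X] := fun i j => C (c i j)
  set a : ℕ → K[X] := fun i => X ^ i
  set b : ℕ → K[X] := ribbonCorrection K k
  simp only [ribbonCoord_eq] at hrel
  obtain ⟨h_aa, h_ab⟩ := bilinSum_eq_zero_of_sum_sum_inl_mul_inl_add_inr_eq_zero s C' a b hrel
  have hb : ∀ i ∈ s, (b i).natDegree ≤ k - 1 := fun i hi =>
    natDegree_ribbonCorrection_le K (by have := Finset.mem_range.mp hi; omega)
  refine ⟨⟨bilinSum s C' b b, (natDegree_bilinSum_C_le s c b b hb hb).trans (by omega), ?_⟩,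
    by simp only [pow_add]; exact h_aa⟩
  have hC : ∀ i j, MvPolynomial.C (c i j) = aeval (MvPolynomial.X (0 : Fin 2)) (C' i j) := by
    simp [C', MvPolynomial.algebraMap_eq]
  simp only [phiSection_eq, hC, ← RingHom.coe_coe (aeval _)]
  rw [sum_sum_map_mul_add_mul s C' _ _ a b, h_aa, h_ab]
  simp only [map_zero, zero_mul, add_zero, zero_add]

/-- Any quadratic relation among the ribbon coordinates `zᵢ`, evaluated on the
sections `φᵢ`, yields `f(w)·t²` with `deg f ≤ 2k-2`; moreover its evaluation at
`zⁱ` (replacing `zᵢ` by `zⁱ`) vanishes. -/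
theorem ribbon_relation_deforms (K : Type*) [Field K] (k : ℕ) (hk : 1 ≤ k)
    (c : ℕ → ℕ → K)
    (hrel : ∑ i ∈ Finset.range (2 * k + 1), ∑ j ∈ Finset.range (2 * k + 1),
      TrivSqZeroExt.inl (Polynomial.C (c i j)) * ribbonCoord K k i * ribbonCoord K k j
        = 0) :
    (∃ f : Polynomial K, f.natDegree ≤ 2 * k - 2 ∧
      ∑ i ∈ Finset.range (2 * k + 1), ∑ j ∈ Finset.range (2 * k + 1),
        MvPolynomial.C (c i j) * phiSection K k i * phiSection K k j =
      Polynomial.aeval (MvPolynomial.X 0 : MvPolynomial (Fin 2) K) f *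
        MvPolynomial.X 1 ^ 2) ∧
    ∑ i ∈ Finset.range (2 * k + 1), ∑ j ∈ Finset.range (2 * k + 1),
      Polynomial.C (c i j) * (Polynomial.X : Polynomial K) ^ (i + j) = 0 :=
  ribbon_relation_deforms_general K k c hrel
end

section
/- Let $m \geq 1$ be an integer. In the formal power series ring $\mathbb{C}[[t]]$, the element $1 - t^{3m+1}$ is invertible; set $x = t^3$ and $y = t^{3m} \cdot (1 - t^{3m+1})^{-1}$. Then $(y - x^m)^3 = x^{3m+1} y^3$, and moreover $y - x^m = t^{6m+1} \cdot (1 - t^{3m+1})^{-1}$; in particular the power series $y - x^m$ has order exactly $6m+1$ (its lowest-order term is $t^{6m+1}$). -/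
/-!
Write `w = (1 - t^{3m+1})⁻¹`. Then `w - 1 = t^{3m+1} w`, so
`y - x^m = t^{3m} (w - 1) = t^{6m+1} w`, and after cubing both sides of the curve equation
equal `t^{18m+3} w³`. As `w` is a unit with constant coefficient `1`, the series `t^{6m+1} w`
has order `6m+1` and leading coefficient `1`.
-/

open PowerSeries

section CuspParameterization

variable {R : Type*} [CommRing R] (m : ℕ) {t w : R}

theorem pow_mul_sub_pow_eq_of_mul_one_sub_eq_one (h : w * (1 - t ^ (3 * m + 1)) = 1) :
    t ^ (3 * m) * w - (t ^ 3) ^ m = t ^ (6 * m + 1) * w := by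
  linear_combination t ^ (3 * m) * h

theorem sub_pow_three_eq_of_mul_one_sub_eq_one (h : w * (1 - t ^ (3 * m + 1)) = 1) :
    (t ^ (3 * m) * w - (t ^ 3) ^ m) ^ 3 = (t ^ 3) ^ (3 * m + 1) * (t ^ (3 * m) * w) ^ 3 := by
  rw [pow_mul_sub_pow_eq_of_mul_one_sub_eq_one m h]
  ring

end CuspParameterization

namespace PowerSeries

theorem constantCoeff_one_sub_X_pow {R : Type*} [CommRing R] {n : ℕ} (hn : n ≠ 0) :
    constantCoeff (1 - X ^ n : R⟦X⟧) = 1 := by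
  simp [hn]

theorem isUnit_one_sub_X_pow {R : Type*} [CommRing R] {n : ℕ} (hn : n ≠ 0) :
    IsUnit (1 - X ^ n : R⟦X⟧) := by
  rw [isUnit_iff_constantCoeff, constantCoeff_one_sub_X_pow hn]
  exact isUnit_one

variable {k : Type*} [Field k] {φ : k⟦X⟧}

theorem order_X_pow_mul_inv (n : ℕ) (hφ : constantCoeff φ ≠ 0) :
    (X ^ n * φ⁻¹).order = (n : ℕ∞) := by
  have hunit : IsUnit φ⁻¹ := by simpa [isUnit_iff_constantCoeff] using hφ
  rw [order_mul, order_X_pow, order_zero_of_unit hunit, add_zero]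

theorem coeff_X_pow_mul_inv (n : ℕ) : coeff n (X ^ n * φ⁻¹) = (constantCoeff φ)⁻¹ := by
  simpa using coeff_X_pow_mul φ⁻¹ n 0

end PowerSeries

theorem rational_parameterization_general (m : ℕ) :
    IsUnit ((1 : PowerSeries ℂ) - X ^ (3 * m + 1)) ∧
    ((X : PowerSeries ℂ) ^ (3 * m) * (1 - X ^ (3 * m + 1))⁻¹ -
        ((X : PowerSeries ℂ) ^ 3) ^ m) ^ 3 =
      ((X : PowerSeries ℂ) ^ 3) ^ (3 * m + 1) *
        ((X : PowerSeries ℂ) ^ (3 * m) * (1 - X ^ (3 * m + 1))⁻¹) ^ 3 ∧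
    (X : PowerSeries ℂ) ^ (3 * m) * (1 - X ^ (3 * m + 1))⁻¹ -
        ((X : PowerSeries ℂ) ^ 3) ^ m =
      X ^ (6 * m + 1) * (1 - X ^ (3 * m + 1))⁻¹ ∧
    ((X : PowerSeries ℂ) ^ (3 * m) * (1 - X ^ (3 * m + 1))⁻¹ -
        ((X : PowerSeries ℂ) ^ 3) ^ m).order = ((6 * m + 1 : ℕ) : ℕ∞) ∧
    (PowerSeries.coeff (R := ℂ) (6 * m + 1))
        ((X : PowerSeries ℂ) ^ (3 * m) * (1 - X ^ (3 * m + 1))⁻¹ -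
          ((X : PowerSeries ℂ) ^ 3) ^ m) = 1 := by
  have hn : 3 * m + 1 ≠ 0 := by omega
  have hc := constantCoeff_one_sub_X_pow (R := ℂ) hn
  have hinv : (1 - X ^ (3 * m + 1) : ℂ⟦X⟧)⁻¹ * (1 - X ^ (3 * m + 1)) = 1 :=
    PowerSeries.inv_mul_cancel _ (by simp [hc])
  have hdiff := pow_mul_sub_pow_eq_of_mul_one_sub_eq_one m hinv
  refine ⟨isUnit_one_sub_X_pow hn, sub_pow_three_eq_of_mul_one_sub_eq_one m hinv, hdiff, ?_, ?_⟩
  · rw [hdiff, order_X_pow_mul_inv _ (by simp [hc])]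
  · rw [hdiff, coeff_X_pow_mul_inv, hc, inv_one]

/-- In `ℂ[[t]]`, with `x = t³` and `y = t^{3m}·(1-t^{3m+1})⁻¹`, one has
`(y - x^m)³ = x^{3m+1}·y³` and `y - x^m = t^{6m+1}·(1-t^{3m+1})⁻¹`; in particular
`y - x^m` has order exactly `6m+1`, with lowest-order term `t^{6m+1}`. -/
theorem rational_parameterization (m : ℕ) (hm : 1 ≤ m) :
    IsUnit ((1 : PowerSeries ℂ) - X ^ (3 * m + 1)) ∧
    ((X : PowerSeries ℂ) ^ (3 * m) * (1 - X ^ (3 * m + 1))⁻¹ -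
        ((X : PowerSeries ℂ) ^ 3) ^ m) ^ 3 =
      ((X : PowerSeries ℂ) ^ 3) ^ (3 * m + 1) *
        ((X : PowerSeries ℂ) ^ (3 * m) * (1 - X ^ (3 * m + 1))⁻¹) ^ 3 ∧
    (X : PowerSeries ℂ) ^ (3 * m) * (1 - X ^ (3 * m + 1))⁻¹ -
        ((X : PowerSeries ℂ) ^ 3) ^ m =
      X ^ (6 * m + 1) * (1 - X ^ (3 * m + 1))⁻¹ ∧
    ((X : PowerSeries ℂ) ^ (3 * m) * (1 - X ^ (3 * m + 1))⁻¹ -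
        ((X : PowerSeries ℂ) ^ 3) ^ m).order = ((6 * m + 1 : ℕ) : ℕ∞) ∧
    (PowerSeries.coeff (R := ℂ) (6 * m + 1))
        ((X : PowerSeries ℂ) ^ (3 * m) * (1 - X ^ (3 * m + 1))⁻¹ -
          ((X : PowerSeries ℂ) ^ 3) ^ m) = 1 :=
  rational_parameterization_general m
end
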